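/- arXiv:1512.02668 — 2 statements merged into one kernel-verified Lean document; each statement's English description precedes it below -/
import Mathlib

section
/- If a choice scenario whose set of budgets (contexts) is closed under intersection violates the weak axiom of revealed preference, then the scenario is contextual: i.e., there exists a budget A and an element η ∈ C(A) such that no global section s has η equal to the support of s restricted to A (in particular, the chosen element x witnessing the weak axiom violation cannot lie in the support of any global section's restriction consistently with both budgets). -/
/-- A choice scenario whose budgets are closed under intersection and which
violates the weak axiom of revealed preference is contextual: some possible
choice set η ∈ C(A) is not the support of any global section restricted to A. -/
theorem violation_of_weak_axiom_implies_contextual {X : Type*}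
    (budgets : Set (Set X)) (C : Set X → Set (Set X))
    (hsub : ∀ A ∈ budgets, ∀ S ∈ C A, S ⊆ A)
    (hinter : ∀ A ∈ budgets, ∀ B ∈ budgets, A ∩ B ∈ budgets)
    (hWA : ¬ (∀ A ∈ budgets, ∀ B ∈ budgets, ∀ x ∈ A ∩ B, ∀ y ∈ A ∩ B,
        (∃ S ∈ C A, x ∈ S) → (∃ T ∈ C B, y ∈ T) → (∃ T ∈ C B, x ∈ T))) :
    ∃ A ∈ budgets, ∃ η ∈ C A, ∀ s : X → Bool,
      (∀ U ∈ budgets, {x | x ∈ U ∧ s x = true} ∈ C U) →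
      η ≠ {x | x ∈ A ∧ s x = true} := by
  push_neg at hWA
  obtain ⟨A, hA, B, hB, x, hx, y, hy, ⟨S, hS, hxS⟩, hT, hnoB⟩ := hWA
  refine ⟨A, hA, S, hS, fun s hs hne => ?_⟩
  have hsx : s x = true := by
    have := hne ▸ hxS
    exact this.2
  exact hnoB {z | z ∈ B ∧ s z = true} (hs B hB) ⟨hx.2, hsx⟩
end

section
/- If a choice scenario obeys the weak axiom and satisfies the overlap property that for all budgets A, B with A ∩ B nonempty there exist (not necessarily distinct) x, y ∈ A ∩ B with f_A(x) = 1 and f_B(y) = 1, then the scenario is non-signalling. Combined with the converse direction, the weak axiom is equivalent to no-signalling for scenarios with this property. -/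
/-- For a choice scenario satisfying the overlap property — any two budgets
with nonempty intersection each choose some element from the intersection —
the weak axiom is equivalent to no-signalling. -/
theorem weak_axiom_iff_nonsignalling_under_overlap {X : Type*}
    (budgets : Set (Set X)) (f : Set X → X → Bool)
    (hov : ∀ A ∈ budgets, ∀ B ∈ budgets, (A ∩ B).Nonempty →
        ∃ x ∈ A ∩ B, ∃ y ∈ A ∩ B, f A x = true ∧ f B y = true) :
    (∀ A ∈ budgets, ∀ B ∈ budgets, ∀ x ∈ A ∩ B, ∀ y ∈ A ∩ B,
        f A x = true → f B y = true → f B x = true) ↔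
    (∀ A ∈ budgets, ∀ B ∈ budgets, ∀ x ∈ A ∩ B, f A x = f B x) := by
  constructor
  · intro hwa A hA B hB x hx
    obtain ⟨a, ha, b, hb, hfa, hfb⟩ := hov A hA B hB ⟨x, hx⟩
    by_cases hfx : f A x = true
    · rw [hfx, hwa A hA B hB x hx b hb hfx hfb]
    · by_cases hgx : f B x = true
      · exact absurd (hwa B hB A hA x ⟨hx.2, hx.1⟩ a ⟨ha.2, ha.1⟩ hgx hfa) hfx
      · simp only [Bool.not_eq_true] at hfx hgx
        rw [hfx, hgx]
  · intro hns A hA B hB x hx y _ hfx _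
    rw [← hns A hA B hB x hx, hfx]
end
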